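/- Casimir functions of the quadratic Poisson algebra Q_{e(2)}(2): with A₁ = x₁, A₂ = x₂, A₃ = x₃, A₄ = x₁x₅ + x₂x₆ − x₄², A₅ = x₁x₆ − x₂x₅ − 2x₃x₄, each of the three polynomials K₁ = A₅, K₂ = A₃² + A₄, K₃ = A₁² + A₂² satisfies {Kᵢ, Aⱼ} = 0 for every 1 ≤ j ≤ 5. -/

import Mathlib

/-!
`K₁ = A₅` and `K₂ = x₃² + x₁x₅ + x₂x₆ − x₄²` are Casimirs of the Lie–Poisson algebra
`𝔠(2)` itself: they Poisson-commute with every coordinate `xₖ`, hence with every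
polynomial, because `{K, ·} = ∑ₖ {K, xₖ} ∂ₖ` is a derivation. `K₃ = x₁² + x₂²` is not,
but its Hamiltonian vector field
`2(x₁² + x₂²) ∂₄ + 4(x₁x₄ − x₂x₃) ∂₅ + 4(x₁x₃ + x₂x₄) ∂₆` kills `x₁, x₂, x₃` and, by a
direct check, `A₄` and `A₅`.
-/

open MvPolynomial

/-- Structure-constant polynomials `c j k = {x_{j+1}, x_{k+1}}` of the 2D conformal
algebra `𝔠(2)` (indices `0,…,5` correspond to `x₁,…,x₆`). -/
noncomputable def c2Mat : Matrix (Fin 6) (Fin 6) (MvPolynomial (Fin 6) ℝ) :=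
  !![0,            0,            -X 1, X 0,  2 * X 3,      2 * X 2;
     0,            0,            X 0,  X 1,  -(2 * X 2),   2 * X 3;
     X 1,          -X 0,         0,    0,    X 5,          -X 4;
     -X 0,         -X 1,         0,    0,    X 4,          X 5;
     -(2 * X 3),   2 * X 2,      -X 5, -X 4, 0,            0;
     -(2 * X 2),   -(2 * X 3),   X 4,  -X 5, 0,            0]

/-- The Lie–Poisson bracket of `𝔠(2)` on `ℝ[x₁,…,x₆]`:
`{p,q} = ∑_{j,k} c_{jk} (∂p/∂x_j) (∂q/∂x_k)`. -/
noncomputable def pb (p q : MvPolynomial (Fin 6) ℝ) : MvPolynomial (Fin 6) ℝ :=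
  ∑ j : Fin 6, ∑ k : Fin 6, c2Mat j k * pderiv j p * pderiv k q

/-- Generators of the quadratic Poisson algebra `Q_{e(2)}(2)`. -/
noncomputable def Ae : Fin 5 → MvPolynomial (Fin 6) ℝ :=
  ![X 0,
    X 1,
    X 2,
    X 0 * X 4 + X 1 * X 5 - X 3 ^ 2,
    X 0 * X 5 - X 1 * X 4 - 2 * X 2 * X 3]

namespace MvPolynomial

variable {σ R : Type*} [CommSemiring R]

@[simp]
theorem pderiv_ofNat (i : σ) (n : ℕ) [n.AtLeastTwo] :
    pderiv i (no_index (OfNat.ofNat n) : MvPolynomial σ R) = 0 := by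
  rw [← Nat.cast_ofNat]
  exact (pderiv i).map_natCast n

variable [Fintype σ]

noncomputable def bivectorBracket (c : Matrix σ σ (MvPolynomial σ R))
    (p q : MvPolynomial σ R) : MvPolynomial σ R :=
  ∑ j, ∑ k, c j k * pderiv j p * pderiv k q

variable (c : Matrix σ σ (MvPolynomial σ R))

theorem bivectorBracket_X_right (p : MvPolynomial σ R) (k : σ) :
    bivectorBracket c p (X k) = ∑ j, c j k * pderiv j p := by
  classical
  simp [bivectorBracket, pderiv_X, Pi.single_apply]

theorem bivectorBracket_eq_sum_bivectorBracket_X_right_mul (p q : MvPolynomial σ R) :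
    bivectorBracket c p q = ∑ k, bivectorBracket c p (X k) * pderiv k q := by
  simp only [bivectorBracket_X_right, Finset.sum_mul]
  exact Finset.sum_comm

theorem bivectorBracket_eq_zero_of_forall_X {p : MvPolynomial σ R}
    (h : ∀ k, bivectorBracket c p (X k) = 0) (q : MvPolynomial σ R) :
    bivectorBracket c p q = 0 := by
  simp [bivectorBracket_eq_sum_bivectorBracket_X_right_mul c p q, h]

end MvPolynomial

theorem pb_X_right (p : MvPolynomial (Fin 6) ℝ) (k : Fin 6) :
    pb p (X k) = ∑ j, c2Mat j k * pderiv j p :=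
  bivectorBracket_X_right c2Mat p k

theorem pb_eq_sum_pb_X_right_mul (p q : MvPolynomial (Fin 6) ℝ) :
    pb p q = ∑ k, pb p (X k) * pderiv k q :=
  bivectorBracket_eq_sum_bivectorBracket_X_right_mul c2Mat p q

theorem pb_Ae_four_X (k : Fin 6) : pb (Ae 4) (X k) = 0 := by
  rw [pb_X_right]
  fin_cases k <;> simp [Fin.sum_univ_six, c2Mat, Ae] <;> ring

theorem pb_Ae_two_sq_add_Ae_three_X (k : Fin 6) : pb (Ae 2 ^ 2 + Ae 3) (X k) = 0 := by
  rw [pb_X_right]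
  fin_cases k <;> simp [Fin.sum_univ_six, c2Mat, Ae] <;> ring

theorem pb_Ae_zero_sq_add_Ae_one_sq_X (k : Fin 6) :
    pb (Ae 0 ^ 2 + Ae 1 ^ 2) (X k) =
      ![0, 0, 0, 2 * (X 0 ^ 2 + X 1 ^ 2), 4 * (X 0 * X 3 - X 1 * X 2),
        4 * (X 0 * X 2 + X 1 * X 3)] k := by
  rw [pb_X_right]
  fin_cases k <;> simp [Fin.sum_univ_six, c2Mat, Ae] <;> ring

/-- Casimir functions of the quadratic Poisson algebra `Q_{e(2)}(2)`. -/
theorem stmt18 :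
    (∀ j : Fin 5, pb (Ae 4) (Ae j) = 0) ∧
    (∀ j : Fin 5, pb (Ae 2 ^ 2 + Ae 3) (Ae j) = 0) ∧
    (∀ j : Fin 5, pb (Ae 0 ^ 2 + Ae 1 ^ 2) (Ae j) = 0) := by
  refine ⟨fun j => ?_, fun j => ?_, fun j => ?_⟩
  · exact bivectorBracket_eq_zero_of_forall_X c2Mat pb_Ae_four_X _
  · exact bivectorBracket_eq_zero_of_forall_X c2Mat pb_Ae_two_sq_add_Ae_three_X _
  · rw [pb_eq_sum_pb_X_right_mul]
    simp only [pb_Ae_zero_sq_add_Ae_one_sq_X]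
    fin_cases j <;> simp [Fin.sum_univ_six, Ae] <;> ring
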